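/- arXiv:2401.15291 — 5 statements merged into one kernel-verified Lean document; each statement's English description precedes it below -/
import Mathlib

section
/- In the code G constructed from W, for any codeword g_j with j ∈ [r_i, r_{i+1}), at most one of the five substrings s_1(g_j), c̃_1(g_j), s_2(g_j), c̃_2(g_j), s_3(g_j) differs from both the corresponding substring of w_i and the corresponding substring of w_{i+1}. -/
/-- Lower index (inclusive) of the `ℓ`-th block (ℓ = 0,…,4) of a word in `F_2^{2n+3D}`
with block structure `s_1 ∘ c̃_1 ∘ s_2 ∘ c̃_2 ∘ s_3`, `|s_ℓ| = D`, `|c̃_ℓ| = n`. -/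
def blockLo (D n : ℕ) : ℕ → ℕ
  | 0 => 0
  | 1 => D
  | 2 => D + n
  | 3 => 2 * D + n
  | _ => 2 * D + 2 * n

/-- Upper index (exclusive) of the `ℓ`-th block. -/
def blockHi (D n : ℕ) : ℕ → ℕ
  | 0 => D
  | 1 => D + n
  | 2 => 2 * D + n
  | 3 => 2 * D + 2 * n
  | _ => 3 * D + 2 * n

/-- If `g` agrees with `v` on all positions up to and including the crossover index `h`
and with `u` strictly afterwards, then at most one of the five blocks of `g` differs from
both the corresponding block of `u` and the corresponding block of `v`. -/
theorem at_most_one_broken_chunk (n D : ℕ) (u v g : Fin (2 * n + 3 * D) → ZMod 2) (h : ℕ)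
    (hpre : ∀ x : Fin (2 * n + 3 * D), x.val ≤ h → g x = v x)
    (hsuf : ∀ x : Fin (2 * n + 3 * D), h < x.val → g x = u x) :
    ∀ ℓ₁ ℓ₂, ℓ₁ < 5 → ℓ₂ < 5 →
      ((∃ x : Fin (2 * n + 3 * D),
          (blockLo D n ℓ₁ ≤ x.val ∧ x.val < blockHi D n ℓ₁) ∧ g x ≠ u x) ∧
        (∃ x : Fin (2 * n + 3 * D),
          (blockLo D n ℓ₁ ≤ x.val ∧ x.val < blockHi D n ℓ₁) ∧ g x ≠ v x)) →
      ((∃ x : Fin (2 * n + 3 * D),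
          (blockLo D n ℓ₂ ≤ x.val ∧ x.val < blockHi D n ℓ₂) ∧ g x ≠ u x) ∧
        (∃ x : Fin (2 * n + 3 * D),
          (blockLo D n ℓ₂ ≤ x.val ∧ x.val < blockHi D n ℓ₂) ∧ g x ≠ v x)) →
      ℓ₁ = ℓ₂ := by
  have key : ∀ ℓ, ((∃ x : Fin (2 * n + 3 * D),
      (blockLo D n ℓ ≤ x.val ∧ x.val < blockHi D n ℓ) ∧ g x ≠ u x) ∧
      (∃ x : Fin (2 * n + 3 * D),
      (blockLo D n ℓ ≤ x.val ∧ x.val < blockHi D n ℓ) ∧ g x ≠ v x)) →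
      blockLo D n ℓ ≤ h ∧ h < blockHi D n ℓ := by
    rintro ℓ ⟨⟨x1, ⟨hl1, hh1⟩, hu⟩, ⟨x2, ⟨hl2, hh2⟩, hv⟩⟩
    have h1 : x1.val ≤ h := by
      by_contra hc
      exact hu (hsuf x1 (by omega))
    have h2 : h < x2.val := by
      by_contra hc
      exact hv (hpre x2 (by omega))
    exact ⟨le_trans hl1 h1, lt_of_lt_of_le h2 (le_of_lt hh2)⟩
  intro ℓ₁ ℓ₂ h1 h2 b1 b2
  have k1 := key ℓ₁ b1
  have k2 := key ℓ₂ b2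
  interval_cases ℓ₁ <;> interval_cases ℓ₂ <;>
    simp [blockLo, blockHi] at k1 k2 <;> omega
end

section
/- In the code G, if the crossover index h_{i,j̄} of g_j lies within one of the two codeword blocks c̃_{ℓ} (ℓ ∈ {1,2}), then the two parity blocks s_ℓ(g_j) and s_{ℓ+1}(g_j) flanking that block are unequal: one equals 0^D and the other equals 1^D. -/
/-- The intermediate codeword `b^D ∘ cw ∘ b^D ∘ cw ∘ b^D ∈ F_2^{2n+3D}`. -/
def wcode (D n : ℕ) (b : ZMod 2) (cw : Fin n → ZMod 2) : Fin (2 * n + 3 * D) → ZMod 2 :=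
  fun x =>
    if _ : x.val < D then b
    else if h2 : x.val < D + n then cw ⟨x.val - D, by omega⟩
    else if _ : x.val < 2 * D + n then b
    else if h4 : x.val < 2 * D + 2 * n then cw ⟨x.val - (2 * D + n), by omega⟩
    else b

/-- If the crossover index `h` of `g` (which agrees with `w_{i+1} = wcode (b+1) c'`
up to and including `h` and with `w_i = wcode b c` afterwards) lies within one of the two
codeword blocks, then the two parity blocks flanking that block are unequal constants:
one is all-`(b+1)`s and the other all-`b`s. -/
theorem flanking_parity_blocks_differ (n D : ℕ) (b : ZMod 2)
    (ci ci' : Fin n → ZMod 2) (g : Fin (2 * n + 3 * D) → ZMod 2) (h : ℕ)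
    (hpre : ∀ x : Fin (2 * n + 3 * D), x.val ≤ h → g x = wcode D n (b + 1) ci' x)
    (hsuf : ∀ x : Fin (2 * n + 3 * D), h < x.val → g x = wcode D n b ci x) :
    ((D ≤ h ∧ h < D + n) →
      (∀ x : Fin (2 * n + 3 * D), x.val < D → g x = b + 1) ∧
      (∀ x : Fin (2 * n + 3 * D), D + n ≤ x.val → x.val < 2 * D + n → g x = b)) ∧
    ((2 * D + n ≤ h ∧ h < 2 * D + 2 * n) →
      (∀ x : Fin (2 * n + 3 * D), D + n ≤ x.val → x.val < 2 * D + n → g x = b + 1) ∧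
      (∀ x : Fin (2 * n + 3 * D), 2 * D + 2 * n ≤ x.val → g x = b)) := by
  refine ⟨fun ⟨h1, h2⟩ => ⟨fun x hx => ?_, fun x hx1 hx2 => ?_⟩,
    fun ⟨h1, h2⟩ => ⟨fun x hx1 hx2 => ?_, fun x hx => ?_⟩⟩
  · rw [hpre x (by omega)]; simp only [wcode]; rw [dif_pos hx]
  · rw [hsuf x (by omega)]; simp only [wcode]
    rw [dif_neg (by omega), dif_neg (by omega), dif_pos (by omega)]
  · rw [hpre x (by omega)]; simp only [wcode]
    rw [dif_neg (by omega), dif_neg (by omega), dif_pos (by omega)]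
  · rw [hsuf x (by omega)]; simp only [wcode]
    rw [dif_neg (by omega), dif_neg (by omega), dif_neg (by omega), dif_neg (by omega)]
end

section
/- In the code G, if the crossover index h_{i,j̄} of g_j lies outside both intervals [0, D) and [d - D, d), then the first and last parity blocks of g_j satisfy s_1(g_j) = s_1(w_{i+1}) ≠ s_3(w_i) = s_3(g_j); consequently s_1(g_j) ≠ s_3(g_j). -/
/-- If the crossover index `h` of `g` lies outside `[0, D)` and `[d - D, d)`
(`d = 2n + 3D`), then the first parity block of `g` equals that of `w_{i+1}`, the last
parity block equals that of `w_i`, and these two blocks of `g` are unequal. -/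
theorem outer_parity_blocks_differ (n D : ℕ) (b : ZMod 2)
    (ci ci' : Fin n → ZMod 2) (g : Fin (2 * n + 3 * D) → ZMod 2) (h : ℕ)
    (hpre : ∀ x : Fin (2 * n + 3 * D), x.val ≤ h → g x = wcode D n (b + 1) ci' x)
    (hsuf : ∀ x : Fin (2 * n + 3 * D), h < x.val → g x = wcode D n b ci x)
    (hlo : ¬ h < D) (hhi : ¬ 2 * D + 2 * n ≤ h) :
    (∀ x : Fin (2 * n + 3 * D), x.val < D → g x = wcode D n (b + 1) ci' x) ∧
    (∀ x : Fin (2 * n + 3 * D), 2 * D + 2 * n ≤ x.val → g x = wcode D n b ci x) ∧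
    (∀ x y : Fin (2 * n + 3 * D), x.val < D → 2 * D + 2 * n ≤ y.val → g x ≠ g y) := by
  refine ⟨fun x hx => hpre x (by omega), fun y hy => hsuf y (by omega), ?_⟩
  intro x y hx hy
  rw [hpre x (by omega), hsuf y (by omega)]
  have hxv : ¬ x.val < D → False := fun h => h hx
  simp only [wcode, dif_pos hx]
  have h1 : ¬ y.val < D := by omega
  have h2 : ¬ y.val < D + n := by omega
  have h3 : ¬ y.val < 2 * D + n := by omega
  have h4 : ¬ y.val < 2 * D + 2 * n := by omega
  simp only [dif_neg h1, dif_neg h2, dif_neg h3, dif_neg h4]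
  intro heq
  have : (1 : ZMod 2) = 0 := by linear_combination heq
  exact one_ne_zero this
end

section
/- Let C ⊆ F_2^n be a linear code of dimension k ≥ 1 and minimum distance D, with encoder enc_C and any decoder dec_C. Let P_fail(C) = max over messages v of Pr[dec_C(enc_C(v) + η) ≠ v] where η ~ Ber(p)^n with p ∈ (0, 1/2). Then Pr[||η'|| > D/2] + (1/2)·Pr[||η'|| = D/2] ≤ P_fail(C), where η' ~ Ber(p)^D. -/
/-- Probability of the event `E` under the `Ber(p)^m` distribution on `F_2^m`:
each coordinate is `1` independently with probability `p`. -/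
def bernPr (p : ℝ) {m : ℕ} (E : Finset (Fin m → ZMod 2)) : ℝ :=
  ∑ η ∈ E, p ^ hammingNorm η * (1 - p) ^ (m - hammingNorm η)

/-!
Take two messages whose codewords differ by a word `c` of weight `D`. At every received word
the decoder errs for at least one of the two, so their failure probabilities add up to at least
`∑ η, min (Pr η) (Pr (η + c))`, the error of the best test between noise `η` and noise `η + c`.
The noise outside the support of `c` factors out of this sum, leaving the same sum for the
all-ones word in `F_2^D`. There `Pr a` and `Pr (a + 1)` compare as the weights of `a` and its
complement (since `p < 1/2`), so the sum is `2 Pr[‖η'‖ > D/2] + Pr[‖η'‖ = D/2]`.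
-/

open Finset

section Weight

variable {ι κ : Type*} [Fintype ι] [Fintype κ] (p : ℝ)

def bernWeight (η : ι → ZMod 2) : ℝ := ∏ i, if η i = 0 then 1 - p else p

lemma bernWeight_eq_pow (η : ι → ZMod 2) :
    bernWeight p η = p ^ hammingNorm η * (1 - p) ^ (Fintype.card ι - hammingNorm η) := by
  have hcard := card_filter_add_card_filter_not (s := univ) (fun i => η i ≠ 0)
  simp only [not_not, card_univ] at hcard
  rw [bernWeight, prod_ite, prod_const, prod_const, mul_comm, hammingNorm]
  congr 2
  omega

lemma bernPr_eq_sum_bernWeight {m : ℕ} (E : Finset (Fin m → ZMod 2)) :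
    bernPr p E = ∑ η ∈ E, bernWeight p η := by
  simp only [bernPr, bernWeight_eq_pow, Fintype.card_fin]

lemma sum_bernWeight [DecidableEq ι] : ∑ η : ι → ZMod 2, bernWeight p η = 1 := by
  have hsum : ∑ z : ZMod 2, (if z = 0 then 1 - p else p) = 1 := by
    simp [ZMod, Fin.sum_univ_two]
  calc ∑ η : ι → ZMod 2, bernWeight p η
      = ∏ _i : ι, ∑ z : ZMod 2, (if z = 0 then 1 - p else p) :=
        (Fintype.prod_sum fun (_ : ι) (z : ZMod 2) => if z = 0 then 1 - p else p).symm
    _ = 1 := by rw [hsum, prod_const_one]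

lemma bernWeight_nonneg {p : ℝ} (hp0 : 0 ≤ p) (hp1 : p ≤ 1) (η : ι → ZMod 2) :
    0 ≤ bernWeight p η :=
  prod_nonneg fun i _ => by split_ifs <;> linarith

lemma bernWeight_comp_equiv (e : κ ≃ ι) (η : ι → ZMod 2) :
    bernWeight p (η ∘ e) = bernWeight p η :=
  e.prod_comp fun i => if η i = 0 then 1 - p else p

lemma bernWeight_eq_mul_restrict (P : ι → Prop) [DecidablePred P] (η : ι → ZMod 2) :
    bernWeight p η = bernWeight p (Subtype.restrict P η)
      * bernWeight p (Subtype.restrict (fun i => ¬ P i) η) :=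
  (Fintype.prod_subtype_mul_prod_subtype P _).symm

lemma bernWeight_le_of_hammingNorm_le {p : ℝ} (hp0 : 0 ≤ p) (hp : p ≤ 1 / 2)
    {a b : ι → ZMod 2} (hab : hammingNorm b ≤ hammingNorm a) :
    bernWeight p a ≤ bernWeight p b := by
  obtain ⟨d, hd⟩ := Nat.exists_eq_add_of_le hab
  obtain ⟨r, hr⟩ := Nat.exists_eq_add_of_le (hammingNorm_le_card_fintype (x := a))
  have hq : 0 ≤ 1 - p := by linarith
  rw [bernWeight_eq_pow, bernWeight_eq_pow, show Fintype.card ι - hammingNorm a = r by omega,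
    show Fintype.card ι - hammingNorm b = d + r by omega, hd, pow_add, pow_add, mul_assoc]
  gcongr
  linarith

lemma hammingNorm_add_one (a : ι → ZMod 2) :
    hammingNorm (a + 1) = Fintype.card ι - hammingNorm a := by
  have hcard := card_filter_add_card_filter_not (s := univ) (fun i => a i ≠ 0)
  have hflip : ∀ z : ZMod 2, z + 1 = 0 ↔ z ≠ 0 := by decide
  simp only [ne_eq, not_not, card_univ] at hcard
  simp only [hammingNorm, Pi.add_apply, Pi.one_apply, ne_eq, hflip, not_not]
  omega

lemma min_bernWeight_add_one {p : ℝ} (hp0 : 0 ≤ p) (hp : p ≤ 1 / 2)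
    (a : ι → ZMod 2) :
    min (bernWeight p a) (bernWeight p (a + 1))
      -- the middle term is the first at `a + 1`, so the two merge after summing over `a`
      = (if Fintype.card ι < 2 * hammingNorm a then bernWeight p a else 0)
        + (if Fintype.card ι < 2 * hammingNorm (a + 1) then bernWeight p (a + 1) else 0)
        + (if 2 * hammingNorm a = Fintype.card ι then bernWeight p a else 0) := by
  have hcompl := hammingNorm_add_one a
  rcases lt_trichotomy (Fintype.card ι) (2 * hammingNorm a) with h | h | h
  · rw [min_eq_left (bernWeight_le_of_hammingNorm_le hp0 hp (by omega)),
      if_pos h, if_neg (by omega), if_neg (by omega), add_zero, add_zero]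
  · have heq : bernWeight p (a + 1) = bernWeight p a :=
      le_antisymm (bernWeight_le_of_hammingNorm_le hp0 hp (by omega))
        (bernWeight_le_of_hammingNorm_le hp0 hp (by omega))
    rw [heq, min_self, if_neg (by omega), if_neg (by omega), if_pos h.symm, zero_add, zero_add]
  · rw [min_eq_right (bernWeight_le_of_hammingNorm_le hp0 hp (by omega)),
      if_neg (by omega), if_pos (by omega), if_neg (by omega), zero_add, add_zero]

end Weight

section Overlap

variable {ι κ : Type*} [Fintype ι] [Fintype κ] [DecidableEq ι] [DecidableEq κ] (p : ℝ)

def bernOverlap (c : ι → ZMod 2) : ℝ := ∑ η, min (bernWeight p η) (bernWeight p (η + c))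

lemma bernOverlap_comp_equiv (e : κ ≃ ι) (c : ι → ZMod 2) :
    bernOverlap p (c ∘ e) = bernOverlap p c :=
  (Fintype.sum_equiv (e.arrowCongr (Equiv.refl _)).symm _ _ fun η => by
    rw [← bernWeight_comp_equiv p e η, ← bernWeight_comp_equiv p e (η + c)]
    rfl).symm

lemma bernOverlap_eq_bernOverlap_one_support {p : ℝ} (hp0 : 0 ≤ p) (hp1 : p ≤ 1)
    (c : ι → ZMod 2) :
    bernOverlap p c = bernOverlap p (1 : {i // c i ≠ 0} → ZMod 2) := by
  set P : ι → Prop := fun i => c i ≠ 0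
  have hone : ∀ z : ZMod 2, z ≠ 0 → z = 1 := by decide
  have hsplit : ∀ η : ι → ZMod 2, min (bernWeight p η) (bernWeight p (η + c))
      = min (bernWeight p (Subtype.restrict P η)) (bernWeight p (Subtype.restrict P η + 1))
        * bernWeight p (Subtype.restrict (fun i => ¬ P i) η) := by
    intro η
    have hon : Subtype.restrict P (η + c) = Subtype.restrict P η + 1 := by
      funext i; simp [hone _ i.2]
    have hoff : Subtype.restrict (fun i => ¬ P i) (η + c) = Subtype.restrict (fun i => ¬ P i) η := by
      funext i; simp [not_not.mp i.2]
    rw [bernWeight_eq_mul_restrict p P η, bernWeight_eq_mul_restrict p P (η + c), hon, hoff,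
      min_mul_of_nonneg _ _ (bernWeight_nonneg hp0 hp1 _)]
  rw [bernOverlap, Fintype.sum_congr _ _ hsplit]
  refine (Fintype.sum_equiv (Equiv.piEquivPiSubtypeProd P fun _ => ZMod 2) _
    (fun ab => min (bernWeight p ab.1) (bernWeight p (ab.1 + 1)) * bernWeight p ab.2)
    fun _ => rfl).trans ?_
  simp only [Fintype.sum_prod_type, ← mul_sum, sum_bernWeight, mul_one]
  rfl

end Overlap

lemma bernOverlap_one_eq {p : ℝ} (hp0 : 0 ≤ p) (hp : p ≤ 1 / 2) (D : ℕ) :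
    bernOverlap p (1 : Fin D → ZMod 2)
      = 2 * bernPr p (univ.filter fun η : Fin D → ZMod 2 => D < 2 * hammingNorm η)
        + bernPr p (univ.filter fun η : Fin D → ZMod 2 => 2 * hammingNorm η = D) := by
  have htail := Equiv.sum_comp (Equiv.addRight (1 : Fin D → ZMod 2))
    fun a => if Fintype.card (Fin D) < 2 * hammingNorm a then bernWeight p a else 0
  simp only [Equiv.coe_addRight] at htail
  simp only [bernOverlap, min_bernWeight_add_one hp0 hp]
  rw [sum_add_distrib, sum_add_distrib]
  simp only [bernPr_eq_sum_bernWeight, sum_filter, Fintype.card_fin] at htail ⊢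
  linarith

lemma sum_min_le_sum_filter_add_sum_filter {G M : Type*} [AddCommGroup G] [Fintype G]
    [DecidableEq M] (w : G → ℝ) (hw : ∀ g, 0 ≤ w g) (dec : G → M) {x y : M} (hxy : x ≠ y)
    (u v : G) :
    ∑ η, min (w η) (w (η + (u - v)))
      ≤ ∑ η with dec (u + η) ≠ x, w η + ∑ η with dec (v + η) ≠ y, w η := by
  rw [sum_filter, sum_filter, ← Equiv.sum_comp (Equiv.addRight (u - v))
    fun η => if dec (v + η) ≠ y then w η else 0, ← sum_add_distrib]
  refine sum_le_sum fun η _ => ?_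
  have hshift : v + (η + (u - v)) = u + η := by abel
  simp only [Equiv.coe_addRight, hshift]
  by_cases hx : dec (u + η) = x
  · have hy : dec (u + η) ≠ y := hx ▸ hxy
    rw [if_neg (not_not.mpr hx), if_pos hy, zero_add]
    exact min_le_right _ _
  · rw [if_pos hx]
    exact (min_le_left _ _).trans (le_add_of_nonneg_right (by split_ifs <;> simp [hw]))

theorem half_distance_noise_lower_bounds_pfail_general (n k D : ℕ)
    (p : ℝ) (hp0 : 0 < p) (hp : p < 1 / 2)
    (enc : (Fin k → ZMod 2) →ₗ[ZMod 2] (Fin n → ZMod 2))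
    (dec : (Fin n → ZMod 2) → (Fin k → ZMod 2))
    (hDeq : ∃ x y : Fin k → ZMod 2, x ≠ y ∧ hammingDist (enc x) (enc y) = D) :
    bernPr p (Finset.univ.filter fun η : Fin D → ZMod 2 => D < 2 * hammingNorm η)
      + (1 / 2) * bernPr p (Finset.univ.filter fun η : Fin D → ZMod 2 =>
          2 * hammingNorm η = D)
    ≤ ⨆ v : Fin k → ZMod 2,
        bernPr p (Finset.univ.filter fun η : Fin n → ZMod 2 => dec (enc v + η) ≠ v) := by
  obtain ⟨x, y, hxy, hdist⟩ := hDeq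
  have hsupport : Fintype.card {i // (enc y - enc x) i ≠ 0} = D := by
    rw [Fintype.card_subtype, ← hdist, hammingDist_eq_hammingNorm, neg_add_eq_sub, hammingNorm]
  have hoverlap : bernOverlap p (enc y - enc x)
      = 2 * bernPr p (univ.filter fun η : Fin D → ZMod 2 => D < 2 * hammingNorm η)
        + bernPr p (univ.filter fun η : Fin D → ZMod 2 => 2 * hammingNorm η = D) := by
    rw [bernOverlap_eq_bernOverlap_one_support hp0.le (by linarith)]
    exact (bernOverlap_comp_equiv p (Fintype.equivFinOfCardEq hsupport) 1).trans
      (bernOverlap_one_eq hp0.le hp.le D)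
  have hfail := sum_min_le_sum_filter_add_sum_filter (bernWeight p)
    (bernWeight_nonneg hp0.le (by linarith)) dec hxy.symm (enc y) (enc x)
  rw [← bernOverlap, ← bernPr_eq_sum_bernWeight, ← bernPr_eq_sum_bernWeight] at hfail
  have hsup := le_ciSup (Finite.bddAbove_range fun v : Fin k → ZMod 2 =>
    bernPr p (univ.filter fun η : Fin n → ZMod 2 => dec (enc v + η) ≠ v))
  linarith [hsup x, hsup y]

/-- For a linear code `C ⊆ F_2^n` of dimension `k ≥ 1` with minimum distance `D`
(encoder `enc`, arbitrary decoder `dec`) and `p ∈ (0, 1/2)`: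
`Pr[‖η'‖ > D/2] + (1/2)·Pr[‖η'‖ = D/2] ≤ P_fail(C)`, where `η' ∼ Ber(p)^D` and
`P_fail(C) = max_v Pr[dec(enc v + η) ≠ v]` with `η ∼ Ber(p)^n`. -/
theorem half_distance_noise_lower_bounds_pfail (n k D : ℕ) (hk : 1 ≤ k)
    (p : ℝ) (hp0 : 0 < p) (hp : p < 1 / 2)
    (enc : (Fin k → ZMod 2) →ₗ[ZMod 2] (Fin n → ZMod 2)) (hinj : Function.Injective enc)
    (dec : (Fin n → ZMod 2) → (Fin k → ZMod 2))
    (hDle : ∀ x y : Fin k → ZMod 2, x ≠ y → D ≤ hammingDist (enc x) (enc y))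
    (hDeq : ∃ x y : Fin k → ZMod 2, x ≠ y ∧ hammingDist (enc x) (enc y) = D) :
    bernPr p (Finset.univ.filter fun η : Fin D → ZMod 2 => D < 2 * hammingNorm η)
      + (1 / 2) * bernPr p (Finset.univ.filter fun η : Fin D → ZMod 2 =>
          2 * hammingNorm η = D)
    ≤ ⨆ v : Fin k → ZMod 2,
        bernPr p (Finset.univ.filter fun η : Fin n → ZMod 2 => dec (enc v + η) ≠ v) :=
  half_distance_noise_lower_bounds_pfail_general n k D p hp0 hp enc dec hDeq
end

section
/- Let x_1, x_2 ∈ F_2^d and let η ~ Ber(p)^d with p ∈ (0, 1/2). Then Pr[Δ(x_2, x_1 + η) ≤ Δ(x_1, x_1 + η)] ≤ exp(−((1−2p)^2 / (4p+2)) · Δ(x_1, x_2)). -/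
private lemma noise_count (d : ℕ) (x₁ x₂ η : Fin d → ZMod 2)
    (h : hammingDist x₂ (x₁ + η) ≤ hammingDist x₁ (x₁ + η)) :
    hammingDist x₁ x₂ ≤
      2 * ((Finset.univ.filter fun i => x₁ i ≠ x₂ i).filter fun i => η i ≠ 0).card := by
  classical
  set S := Finset.univ.filter fun i : Fin d => x₁ i ≠ x₂ i with hS
  have key : ∀ a b c : ZMod 2, ((b ≠ a + c) ↔ (if a ≠ b then c = 0 else c ≠ 0)) := by decide
  set A := ∑ i ∈ S, if η i = 0 then 1 else 0 with hA
  set C := ∑ i ∈ S, if η i ≠ 0 then 1 else 0 with hC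
  set B := ∑ i ∈ Finset.univ.filter (fun i : Fin d => ¬ (x₁ i ≠ x₂ i)), if η i ≠ 0 then 1 else 0 with hB
  have h2 : hammingDist x₂ (x₁ + η) = A + B := by
    rw [hammingDist, Finset.card_filter,
      ← Finset.sum_filter_add_sum_filter_not Finset.univ (fun i => x₁ i ≠ x₂ i), ← hS]
    congr 1
    · exact Finset.sum_congr rfl fun i hi => by
        have hi' : x₁ i ≠ x₂ i := (Finset.mem_filter.mp hi).2
        simp only [Pi.add_apply]
        by_cases hη : η i = 0 <;> simp [hη, hi', key (x₁ i) (x₂ i) (η i), eq_comm]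
    · exact Finset.sum_congr rfl fun i hi => by
        have hi' : ¬ (x₁ i ≠ x₂ i) := (Finset.mem_filter.mp hi).2
        simp only [Pi.add_apply]
        by_cases hη : η i = 0 <;> simp [hη, hi', key (x₁ i) (x₂ i) (η i), eq_comm]
  have h3 : hammingDist x₁ (x₁ + η) = C + B := by
    rw [hammingDist, Finset.card_filter,
      ← Finset.sum_filter_add_sum_filter_not Finset.univ (fun i => x₁ i ≠ x₂ i), ← hS]
    have point : ∀ i, ((x₁ i ≠ (x₁ + η) i) ↔ η i ≠ 0) := by
      intro i
      have : ∀ a c : ZMod 2, ((a ≠ a + c) ↔ c ≠ 0) := by decide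
      simpa using this (x₁ i) (η i)
    congr 1 <;> exact Finset.sum_congr rfl fun i _ => by by_cases hη : η i = 0 <;> simp [hη, point i]
  have h4 : hammingDist x₁ x₂ = A + C := by
    rw [hammingDist, ← hS, Finset.card_eq_sum_ones, hA, hC, ← Finset.sum_add_distrib]
    exact Finset.sum_congr rfl fun i _ => by by_cases hη : η i = 0 <;> simp [hη]
  have h5 : ((S.filter fun i => η i ≠ 0).card) = C := by
    rw [hC, Finset.card_filter]
  rw [h2, h3] at h
  omega

/-- For `x₁, x₂ ∈ F_2^d` and `η ∼ Ber(p)^d`, `p ∈ (0,1/2)`: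
`Pr[Δ(x₂, x₁+η) ≤ Δ(x₁, x₁+η)] ≤ exp(−((1−2p)²/(4p+2))·Δ(x₁,x₂))`. -/
theorem noise_chernoff (d : ℕ) (p : ℝ) (hp0 : 0 < p) (hp : p < 1 / 2)
    (x₁ x₂ : Fin d → ZMod 2) :
    bernPr p (Finset.univ.filter fun η : Fin d → ZMod 2 =>
        hammingDist x₂ (x₁ + η) ≤ hammingDist x₁ (x₁ + η))
      ≤ Real.exp (-((1 - 2 * p) ^ 2 / (4 * p + 2)) * (hammingDist x₁ x₂ : ℝ)) := by
  classical
  have hp1 : 0 < 1 - p := by linarith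
  set S := Finset.univ.filter fun i : Fin d => x₁ i ≠ x₂ i with hS
  set k := hammingDist x₁ x₂ with hk
  have hkS : k = S.card := rfl
  set s : ℝ := Real.sqrt (p / (1 - p)) with hs
  have hsd : (0:ℝ) < p / (1 - p) := div_pos hp0 hp1
  have hs0 : 0 < s := Real.sqrt_pos.2 hsd
  have hs2 : s ^ 2 = p / (1 - p) := Real.sq_sqrt hsd.le
  have hs1 : s ≤ 1 := by
    have h : p / (1 - p) ≤ 1 := by rw [div_le_one hp1]; linarith
    calc s ≤ Real.sqrt 1 := Real.sqrt_le_sqrt h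
      _ = 1 := Real.sqrt_one
  set N : (Fin d → ZMod 2) → ℕ := fun η => (S.filter fun i => η i ≠ 0).card with hN
  -- weight as a product over coordinates
  have hw : ∀ η : Fin d → ZMod 2,
      p ^ hammingNorm η * (1 - p) ^ (d - hammingNorm η)
        = ∏ i, (if η i ≠ 0 then p else 1 - p) := by
    intro η
    rw [Finset.prod_ite, Finset.prod_const, Finset.prod_const]
    have hc : (Finset.univ.filter fun i : Fin d => η i ≠ 0).card = hammingNorm η := rfl
    rw [hc]
    congr 2
    rw [Finset.filter_not, Finset.card_sdiff_of_subset (Finset.filter_subset _ _), hc]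
    simp
  have hwpos : ∀ η : Fin d → ZMod 2,
      0 ≤ p ^ hammingNorm η * (1 - p) ^ (d - hammingNorm η) := fun η =>
    mul_nonneg (pow_nonneg hp0.le _) (pow_nonneg hp1.le _)
  set f : Fin d → ZMod 2 → ℝ := fun i b =>
    (if b ≠ 0 then p else 1 - p) * (if (x₁ i ≠ x₂ i) ∧ b ≠ 0 then (s ^ 2)⁻¹ else 1) with hf
  -- step 1: pointwise bound by tilted weight
  have step1 : bernPr p (Finset.univ.filter fun η : Fin d → ZMod 2 =>
        hammingDist x₂ (x₁ + η) ≤ hammingDist x₁ (x₁ + η))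
      ≤ ∑ η : Fin d → ZMod 2,
          s ^ k * ∏ i, f i (η i) := by
    rw [bernPr]
    have hterm : ∀ η : Fin d → ZMod 2,
        s ^ k * ∏ i, f i (η i)
          = (p ^ hammingNorm η * (1 - p) ^ (d - hammingNorm η)) * (s ^ k * ((s ^ 2)⁻¹) ^ N η) := by
      intro η
      rw [hf]
      simp only
      rw [Finset.prod_mul_distrib, ← hw]
      have : (∏ i, if (x₁ i ≠ x₂ i) ∧ η i ≠ 0 then (s ^ 2)⁻¹ else 1) = ((s ^ 2)⁻¹) ^ N η := by
        rw [← Finset.prod_filter, Finset.prod_const]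
        congr 1
        simp only [hN]
        rw [Finset.filter_filter]
      rw [this]; ring
    calc ∑ η ∈ (Finset.univ.filter fun η : Fin d → ZMod 2 =>
            hammingDist x₂ (x₁ + η) ≤ hammingDist x₁ (x₁ + η)),
          p ^ hammingNorm η * (1 - p) ^ (d - hammingNorm η)
        ≤ ∑ η ∈ (Finset.univ.filter fun η : Fin d → ZMod 2 =>
            hammingDist x₂ (x₁ + η) ≤ hammingDist x₁ (x₁ + η)),
          s ^ k * ∏ i, f i (η i) := by
          apply Finset.sum_le_sum
          intro η hη
          rw [hterm η]
          have hev := noise_count d x₁ x₂ η (Finset.mem_filter.mp hη).2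
          have hkN : k ≤ 2 * N η := hev
          have h2N : s ^ (2 * N η) ≤ s ^ k := pow_le_pow_of_le_one hs0.le hs1 hkN
          have hfac : 1 ≤ s ^ k * ((s ^ 2)⁻¹) ^ N η := by
            rw [inv_pow, ← pow_mul, ← div_eq_mul_inv,
              le_div_iff₀ (pow_pos hs0 _), one_mul]
            exact h2N
          nlinarith [hwpos η, hfac, mul_le_mul_of_nonneg_left hfac (hwpos η)]
      _ ≤ ∑ η : Fin d → ZMod 2, s ^ k * ∏ i, f i (η i) := by
          apply Finset.sum_le_sum_of_subset_of_nonneg (Finset.filter_subset _ _)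
          intro η _ _
          rw [hterm η]
          have := hwpos η
          positivity
  -- step 2: factorize
  have step2 : ∑ η : Fin d → ZMod 2, s ^ k * ∏ i, f i (η i)
      = s ^ k * (2 * (1 - p)) ^ k := by
    rw [← Finset.mul_sum]
    congr 1
    rw [← Fintype.piFinset_univ, ← Finset.prod_univ_sum]
    have hone : ∀ i, (∑ b : ZMod 2, f i b) = if x₁ i ≠ x₂ i then 2 * (1 - p) else 1 := by
      intro i
      have hsum : (∑ b : ZMod 2, f i b) = f i 0 + f i 1 := Fin.sum_univ_two (f i)
      rw [hsum]
      have h1 : (1 : ZMod 2) ≠ 0 := by decide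
      by_cases hi : x₁ i ≠ x₂ i
      · simp only [hf, hi, h1, ne_eq, not_true_eq_false, if_false, if_true,
          true_and, and_true, and_false, not_false_eq_true, mul_one]
        rw [hs2, inv_div]
        field_simp
        ring
      · simp [hf, hi, h1]
    rw [Finset.prod_congr rfl fun i _ => hone i, Finset.prod_ite, Finset.prod_const,
      Finset.prod_const, one_pow, mul_one, hkS, hS]
  -- step 3: the base is at most exp(-c)
  set c : ℝ := (1 - 2 * p) ^ 2 / (4 * p + 2) with hc
  have hbase : s * (2 * (1 - p)) ≤ Real.exp (-c) := by
    have ha : (0:ℝ) ≤ s * (2 * (1 - p)) := by positivity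
    have hsq : (s * (2 * (1 - p))) ^ 2 = 4 * p * (1 - p) := by
      rw [mul_pow, hs2]; field_simp; ring
    have hq : 4 * p * (1 - p) = 1 - (1 - 2 * p) ^ 2 := by ring
    have hlog : 1 - (1 - 2 * p) ^ 2 ≤ Real.exp (-(1 - 2 * p) ^ 2) := by
      have := Real.add_one_le_exp (-(1 - 2 * p) ^ 2)
      linarith
    have hcpos : 0 ≤ c := by rw [hc]; positivity
    have hc' : c * (4 * p + 2) = (1 - 2 * p) ^ 2 := by
      rw [hc]; field_simp
    have hcc : -(1 - 2 * p) ^ 2 ≤ -(2 * c) := by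
      nlinarith [mul_nonneg hcpos hp0.le]
    have hsq2 : (s * (2 * (1 - p))) ^ 2 ≤ (Real.exp (-c)) ^ 2 := by
      rw [hsq, hq]
      calc 1 - (1 - 2 * p) ^ 2 ≤ Real.exp (-(1 - 2 * p) ^ 2) := hlog
        _ ≤ Real.exp (-(2 * c)) := Real.exp_le_exp.2 hcc
        _ = (Real.exp (-c)) ^ 2 := by
            rw [sq, ← Real.exp_add]; congr 1; ring
    calc s * (2 * (1 - p)) = Real.sqrt ((s * (2 * (1 - p))) ^ 2) := (Real.sqrt_sq ha).symm
      _ ≤ Real.sqrt ((Real.exp (-c)) ^ 2) := Real.sqrt_le_sqrt hsq2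
      _ = Real.exp (-c) := Real.sqrt_sq (Real.exp_pos _).le
  calc bernPr p _ ≤ s ^ k * (2 * (1 - p)) ^ k := step1.trans step2.le
    _ = (s * (2 * (1 - p))) ^ k := (mul_pow s (2 * (1 - p)) k).symm
    _ ≤ (Real.exp (-c)) ^ k := pow_le_pow_left₀ (by positivity) hbase k
    _ = Real.exp (-c * k) := by rw [← Real.exp_nat_mul, mul_comm]
end
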